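/- arXiv:2401.03711 — 3 statements merged into one kernel-verified Lean document; each statement's English description precedes it below -/
import Mathlib

section
/- Consider the constraint system over natural numbers: a₂ = p₅ + p₇ + p₈, p₆ = p₀ + p₂ + p₃ + p₅ + p₇, together with the constraint p₆ = p₈. Then for natural numbers a₂, p₀, p₂, p₃: there exist p₅, p₆, p₇, p₈ ∈ ℕ satisfying all three equations if and only if a₂ ≥ p₀ + p₂ + p₃ and a₂ − (p₀ + p₂ + p₃) is even. -/
/-! Substituting `p₆ = p₈` turns the system into `a₂ = (p₀ + p₂ + p₃) + 2 (p₅ + p₇)`, and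
`p₅ + p₇` takes every value in `ℕ` (already with `p₇ = 0`). -/

theorem exists_eq_add_two_mul_iff (s a : ℕ) : (∃ u, a = s + 2 * u) ↔ s ≤ a ∧ Even (a - s) := by
  constructor
  · rintro ⟨u, rfl⟩
    exact ⟨by omega, u, by omega⟩
  · rintro ⟨hle, u, hu⟩
    exact ⟨u, by omega⟩

/-- Running example `H₁ ≜ (p₆ = p₈)`: the integer shadow of `E ∧ H₁` after
eliminating `p₅, p₆, p₇, p₈` is exactly
`{(a₂,p₀,p₂,p₃) | p₀+p₂+p₃ ≤ a₂ ∧ a₂ ≡ p₀+p₂+p₃ (mod 2)}`. -/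
theorem stmt_7 (a₂ p₀ p₂ p₃ : ℕ) :
    (∃ p₅ p₆ p₇ p₈ : ℕ,
        a₂ = p₅ + p₇ + p₈ ∧ p₆ = p₀ + p₂ + p₃ + p₅ + p₇ ∧ p₆ = p₈)
      ↔ (p₀ + p₂ + p₃ ≤ a₂ ∧ Even (a₂ - (p₀ + p₂ + p₃))) := by
  rw [← exists_eq_add_two_mul_iff]
  constructor
  · rintro ⟨p₅, p₆, p₇, p₈, ha₂, hp₆, rfl⟩
    exact ⟨p₅ + p₇, by omega⟩
  · rintro ⟨u, hu⟩
    exact ⟨u, p₀ + p₂ + p₃ + u, 0, p₀ + p₂ + p₃ + u, by omega, rfl, rfl⟩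
end

section
/- Consider the reduction system E: p₁ = p₄ + 4096, p₆ = p₀ + p₂ + p₃ + p₅ + p₇, a₁ = p₇ + p₈, a₂ = a₁ + p₅ (all over ℕ). Then for all natural numbers a₂, p₀, p₂, p₃, p₄: (there exist a₁, p₁, p₅, p₆, p₇, p₈ ∈ ℕ satisfying E together with G₁ ≜ p₅ + p₆ ≤ p₈) if and only if p₀ + p₂ + p₃ ≤ a₂. -/
/-- Running example `G₁ ≜ (p₅ + p₆ ≤ p₈)`: the projection of `E ∧ G₁` onto
`{a₂, p₀, p₂, p₃, p₄}` is exactly `G₂ ≜ (p₀ + p₂ + p₃ ≤ a₂)`. -/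
theorem stmt_14 (a₂ p₀ p₂ p₃ p₄ : ℕ) :
    (∃ a₁ p₁ p₅ p₆ p₇ p₈ : ℕ,
        p₁ = p₄ + 4096 ∧
        p₆ = p₀ + p₂ + p₃ + p₅ + p₇ ∧
        a₁ = p₇ + p₈ ∧
        a₂ = a₁ + p₅ ∧
        p₅ + p₆ ≤ p₈)
      ↔ p₀ + p₂ + p₃ ≤ a₂ := by
  constructor
  · rintro ⟨a₁, p₁, p₅, p₆, p₇, p₈, -, rfl, rfl, rfl, hG₁⟩
    omega
  · intro hG₂
    exact ⟨a₂, p₄ + 4096, 0, p₀ + p₂ + p₃, 0, a₂, rfl, rfl, (zero_add a₂).symm, rfl,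
      by rwa [zero_add]⟩
end

section
/- Let C = ⋀_{i∈I} αᵢ be a conjunction of linear constraints and let (B, C) ↦ (B', C') be an elimination step of type (RED) or (AGP). If m : B → ℕ satisfies E ∧ C, then the valuation m' : B' → ℕ defined by restriction (for RED, dropping p; for AGP, setting m'(a) = Σ_{x∈X} m(x) and restricting elsewhere) satisfies m ≡_E m' and m' ⊨ E ∧ C'. (Completeness of (RED) and (AGP): C ⇛_E C'.) -/
/-!
Both steps are proved with `m' = m`: the witness `mm` of `E` is unchanged. For (RED) the new
coefficients move `α p · m p` onto the variables of `X`, which by `m p = Σ_{x ∈ X} m x` leaves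
the value of every literal unchanged. For (AGP) the new literal replaces `Σ_{x ∈ X} α x · m x`
by `α xj · m a = Σ_{x ∈ X} α xj · m x`, which is at least as large since `α xj` is the largest
coefficient on `X` and `m ≥ 0`.
-/

/-- Satisfaction of one normalized linear literal `(α, b)`. -/
def litSat {Var : Type*} [Fintype Var] (m : Var → ℕ) (L : (Var → ℤ) × ℤ) : Prop :=
  ∑ v, L.1 v * (m v : ℤ) + L.2 ≥ 0

/-- Satisfaction of a cube (conjunction of literals). -/
def cubeSat {Var ι : Type*} [Fintype Var] (C : ι → (Var → ℤ) × ℤ) (m : Var → ℕ) : Prop :=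
  ∀ i, litSat m (C i)

section EliminationCoefficients

variable {Var R : Type*} [Fintype Var] [DecidableEq Var]

def redCoeff [Zero R] [Add R] (α : Var → R) (p : Var) (X : Finset Var) (v : Var) : R :=
  if v = p then 0 else if v ∈ X then α v + α p else α v

def agpCoeff [Zero R] [Add R] (α : Var → R) (a xj : Var) (X : Finset Var) (v : Var) : R :=
  if v = a then α a + α xj else if v ∈ X then 0 else α v

theorem sum_redCoeff_mul [CommRing R] (α w : Var → R) {p : Var} {X : Finset Var}
    (hpX : p ∉ X) :
    ∑ v, redCoeff α p X v * w v = ∑ v, α v * w v - α p * w p + α p * ∑ x ∈ X, w x := by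
  have hpoint : ∀ v, redCoeff α p X v * w v =
      α v * w v - (if v = p then α p * w p else 0) + (if v ∈ X then α p * w v else 0) := by
    intro v
    by_cases hvp : v = p
    · subst hvp; simp [redCoeff, hpX]
    · by_cases hvX : v ∈ X <;> simp [redCoeff, hvp, hvX, add_mul]
  simp only [hpoint, Finset.sum_add_distrib, Finset.sum_sub_distrib, Finset.sum_ite_eq',
    Finset.mem_univ, if_true, Finset.sum_ite_mem, Finset.univ_inter, Finset.mul_sum]

theorem sum_redCoeff_mul_eq [CommRing R] (α w : Var → R) {p : Var} {X : Finset Var}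
    (hpX : p ∉ X) (hw : w p = ∑ x ∈ X, w x) :
    ∑ v, redCoeff α p X v * w v = ∑ v, α v * w v := by
  rw [sum_redCoeff_mul α w hpX, ← hw, sub_add_cancel]

theorem sum_agpCoeff_mul [CommRing R] (α w : Var → R) {a xj : Var} {X : Finset Var}
    (haX : a ∉ X) :
    ∑ v, agpCoeff α a xj X v * w v =
      ∑ v, α v * w v + α xj * w a - ∑ x ∈ X, α x * w x := by
  have hpoint : ∀ v, agpCoeff α a xj X v * w v =
      α v * w v + (if v = a then α xj * w a else 0) - (if v ∈ X then α v * w v else 0) := by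
    intro v
    by_cases hva : v = a
    · subst hva; simp [agpCoeff, haX, add_mul]
    · by_cases hvX : v ∈ X <;> simp [agpCoeff, hva, hvX]
  simp only [hpoint, Finset.sum_add_distrib, Finset.sum_sub_distrib, Finset.sum_ite_eq',
    Finset.mem_univ, if_true, Finset.sum_ite_mem, Finset.univ_inter]

theorem sum_mul_le_sum_agpCoeff_mul [CommRing R] [LinearOrder R] [IsStrictOrderedRing R]
    (α w : Var → R) {a xj : Var} {X : Finset Var} (haX : a ∉ X)
    (hα : ∀ x ∈ X, α x ≤ α xj) (hw : ∀ x ∈ X, 0 ≤ w x) (hwa : w a = ∑ x ∈ X, w x) :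
    ∑ v, α v * w v ≤ ∑ v, agpCoeff α a xj X v * w v := by
  have hX : ∑ x ∈ X, α x * w x ≤ α xj * w a := by
    rw [hwa, Finset.mul_sum]
    exact Finset.sum_le_sum fun x hx => mul_le_mul_of_nonneg_right (hα x hx) (hw x hx)
  rw [sum_agpCoeff_mul α w haX]
  linarith

end EliminationCoefficients

theorem litSat_of_sum_le {Var : Type*} [Fintype Var] {m : Var → ℕ} {L L' : (Var → ℤ) × ℤ}
    (hb : L'.2 = L.2) (hsum : ∑ v, L.1 v * (m v : ℤ) ≤ ∑ v, L'.1 v * (m v : ℤ))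
    (hL : litSat m L) : litSat m L' := by
  unfold litSat at hL ⊢
  linarith

theorem natCast_eq_sum_of_eqOn {Var : Type*} {B X : Finset Var} {m mm : Var → ℕ} {p : Var}
    (hmm : ∀ v ∈ B, mm v = m v) (hp : p ∈ B) (hX : X ⊆ B)
    (h : (mm p : ℤ) = ∑ x ∈ X, (mm x : ℤ)) : (m p : ℤ) = ∑ x ∈ X, (m x : ℤ) := by
  rw [← hmm p hp, h]
  exact Finset.sum_congr rfl fun x hx => by rw [hmm x (hX hx)]

theorem stmt_16_general {Var ι : Type*} [Fintype Var] [DecidableEq Var]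
    (satE : (Var → ℕ) → Prop)
    (B B' : Finset Var)
    (C C' : ι → (Var → ℤ) × ℤ)
    (hstep :
      -- (RED)
      (∃ (X : Finset Var) (p : Var), p ∈ B ∧ p ∉ X ∧ (↑X : Set Var) ⊆ ↑B' ∧
        B' = B.erase p ∧
        (∀ mm, satE mm → (mm p : ℤ) = ∑ x ∈ X, (mm x : ℤ)) ∧
        (∀ i, (C' i).2 = (C i).2 ∧ ∀ v,
          (C' i).1 v =
            if v = p then 0
            else if v ∈ X then (C i).1 v + (C i).1 p
            else (C i).1 v))
      ∨
      -- (AGP)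
      (∃ (X : Finset Var) (a xj : Var), a ∈ B ∧ a ∉ X ∧ (↑X : Set Var) ⊆ ↑B ∧
        xj ∈ X ∧ B' = B \ X ∧
        (∀ i, ∀ x ∈ X, (C i).1 x ≤ (C i).1 xj) ∧
        (∀ mm, satE mm → (mm a : ℤ) = ∑ x ∈ X, (mm x : ℤ)) ∧
        (∀ i, (C' i).2 = (C i).2 ∧ ∀ v,
          (C' i).1 v =
            if v = a then (C i).1 a + (C i).1 xj
            else if v ∈ X then 0
            else (C i).1 v)))
    (m : Var → ℕ)
    (hC : cubeSat C m)
    (hE : ∃ mm, satE mm ∧ ∀ v ∈ B, mm v = m v) :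
    ∃ m' : Var → ℕ,
      (∀ v ∈ B', m' v = m v) ∧
      (∃ mm, satE mm ∧ (∀ v ∈ B, mm v = m v) ∧ (∀ v ∈ B', mm v = m' v)) ∧
      cubeSat C' m' := by
  obtain ⟨mm, hsatE, hmm⟩ := hE
  rcases hstep with ⟨X, p, hpB, hpX, hXB', rfl, hEp, hC'⟩ |
    ⟨X, a, xj, haB, haX, hXB, -, rfl, hle, hEa, hC'⟩
  · have hmp := natCast_eq_sum_of_eqOn hmm hpB
      ((Finset.coe_subset.mp hXB').trans (Finset.erase_subset p B)) (hEp mm hsatE)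
    refine ⟨m, fun _ _ => rfl, ⟨mm, hsatE, hmm, fun v hv => hmm v (Finset.mem_of_mem_erase hv)⟩,
      fun i => ?_⟩
    obtain ⟨hb, hα⟩ := hC' i
    have hα' : (C' i).1 = redCoeff (C i).1 p X := funext hα
    exact litSat_of_sum_le hb (hα' ▸ (sum_redCoeff_mul_eq _ _ hpX hmp).ge) (hC i)
  · have hma := natCast_eq_sum_of_eqOn hmm haB (Finset.coe_subset.mp hXB) (hEa mm hsatE)
    refine ⟨m, fun _ _ => rfl, ⟨mm, hsatE, hmm, fun v hv => hmm v (Finset.mem_sdiff.mp hv).1⟩,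
      fun i => ?_⟩
    obtain ⟨hb, hα⟩ := hC' i
    have hα' : (C' i).1 = agpCoeff (C i).1 a xj X := funext hα
    exact litSat_of_sum_le hb
      (hα' ▸ sum_mul_le_sum_agpCoeff_mul _ _ haX (hle i) (fun x _ => by positivity) hma) (hC i)

/-- Completeness of the (RED) and (AGP) elimination steps: if `m : B → ℕ`
satisfies `E ∧ C`, then its restriction `m'` to `B'` satisfies `m ≡_E m'` and
`m' ⊨ E ∧ C'`. -/
theorem stmt_16 {Var ι : Type*} [Fintype Var] [DecidableEq Var]
    (satE : (Var → ℕ) → Prop)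
    (B B' : Finset Var)
    (C C' : ι → (Var → ℤ) × ℤ)
    (hfv : ∀ i v, v ∉ B → (C i).1 v = 0)
    (hstep :
      -- (RED)
      (∃ (X : Finset Var) (p : Var), p ∈ B ∧ p ∉ X ∧ (↑X : Set Var) ⊆ ↑B' ∧
        B' = B.erase p ∧
        (∀ mm, satE mm → (mm p : ℤ) = ∑ x ∈ X, (mm x : ℤ)) ∧
        (∀ i, (C' i).2 = (C i).2 ∧ ∀ v,
          (C' i).1 v =
            if v = p then 0
            else if v ∈ X then (C i).1 v + (C i).1 p
            else (C i).1 v))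
      ∨
      -- (AGP)
      (∃ (X : Finset Var) (a xj : Var), a ∈ B ∧ a ∉ X ∧ (↑X : Set Var) ⊆ ↑B ∧
        xj ∈ X ∧ B' = B \ X ∧
        (∀ i, ∀ x ∈ X, (C i).1 x ≤ (C i).1 xj) ∧
        (∀ mm, satE mm → (mm a : ℤ) = ∑ x ∈ X, (mm x : ℤ)) ∧
        (∀ i, (C' i).2 = (C i).2 ∧ ∀ v,
          (C' i).1 v =
            if v = a then (C i).1 a + (C i).1 xj
            else if v ∈ X then 0
            else (C i).1 v)))
    (m : Var → ℕ)
    (hC : cubeSat C m)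
    (hE : ∃ mm, satE mm ∧ ∀ v ∈ B, mm v = m v) :
    ∃ m' : Var → ℕ,
      (∀ v ∈ B', m' v = m v) ∧
      (∃ mm, satE mm ∧ (∀ v ∈ B, mm v = m v) ∧ (∀ v ∈ B', mm v = m' v)) ∧
      cubeSat C' m' :=
  stmt_16_general satE B B' C C' hstep m hC hE
end
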